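/- Let R be a ring and S a multiplicatively closed subset of R consisting of central regular elements. Then R is P-symmetric if and only if S^{-1}R is P-symmetric. -/

import Mathlib

/-- A (two-sided) ideal `P` of a ring is prime if it is proper and for all `a b`,
`a R b ⊆ P` implies `a ∈ P` or `b ∈ P`. -/
def IsPrimeTwoSided {R : Type*} [Ring R] (P : TwoSidedIdeal R) : Prop :=
  P ≠ ⊤ ∧ ∀ a b : R, (∀ r : R, a * r * b ∈ P) → a ∈ P ∨ b ∈ P

/-- The prime radical `P(R)`: the intersection of all prime (two-sided) ideals of `R`. -/
def primeRadical (R : Type*) [Ring R] : Set R :=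
  {x | ∀ P : TwoSidedIdeal R, IsPrimeTwoSided P → x ∈ P}

/-- A ring `R` is `P`-symmetric if `a * b * c = 0` implies `b * a * c ∈ P(R)`. -/
def IsPSymmetric (R : Type*) [Ring R] : Prop :=
  ∀ a b c : R, a * b * c = 0 → b * a * c ∈ primeRadical R

/-!
By Levitzki's theorem the prime radical consists of the strongly nilpotent elements: those `x`
for which every m-sequence `x₀ = x`, `xₙ₊₁ = xₙ rₙ xₙ` eventually vanishes. The map `R → S⁻¹R` is
injective and every element of `S⁻¹R` is a central unit times the image of an element of `R`.
Hence primes of `S⁻¹R` pull back to primes of `R`, so `P(R)` maps into `P(S⁻¹R)`; conversely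
m-sequences of `R` stay m-sequences in `S⁻¹R`, so an element of `R` whose image is strongly
nilpotent is strongly nilpotent. The central unit factors can be pulled out of a product `abc`,
so the defining condition of `P`-symmetry passes in both directions.
-/

section

variable {R : Type*} [Ring R]

def IsMSequence (f : ℕ → R) : Prop :=
  ∀ n, ∃ r, f (n + 1) = f n * r * f n

def IsStronglyNilpotent (x : R) : Prop :=
  ∀ f : ℕ → R, IsMSequence f → f 0 = x → ∃ n, f n = 0

theorem IsMSequence.mem_of_le {f : ℕ → R} (hf : IsMSequence f) (I : TwoSidedIdeal R) {i j : ℕ}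
    (hi : f i ∈ I) (hij : i ≤ j) : f j ∈ I := by
  induction j, hij using Nat.le_induction with
  | base => exact hi
  | succ n _ ih =>
    obtain ⟨r, hr⟩ := hf n
    rw [hr]
    exact I.mul_mem_right _ _ (I.mul_mem_right _ _ ih)

theorem IsPrimeTwoSided.exists_mul_mul_notMem {P : TwoSidedIdeal R} (hP : IsPrimeTwoSided P)
    {y : R} (hy : y ∉ P) : ∃ r, y * r * y ∉ P := by
  by_contra! h
  exact hy ((hP.2 y y h).elim id id)

theorem IsPrimeTwoSided.exists_isMSequence_notMem {P : TwoSidedIdeal R} (hP : IsPrimeTwoSided P)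
    {x : R} (hx : x ∉ P) : ∃ f : ℕ → R, IsMSequence f ∧ f 0 = x ∧ ∀ n, f n ∉ P := by
  choose g hg using fun y : {y : R // y ∉ P} => hP.exists_mul_mul_notMem y.2
  let F : ℕ → {y : R // y ∉ P} := fun n => Nat.rec ⟨x, hx⟩ (fun _ y => ⟨y * g y * y, hg y⟩) n
  exact ⟨(F · |>.1), fun n => ⟨g (F n), rfl⟩, rfl, (F · |>.2)⟩

theorem IsStronglyNilpotent.mem_primeRadical {x : R} (hx : IsStronglyNilpotent x) :
    x ∈ primeRadical R := by
  intro P hP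
  by_contra hxP
  obtain ⟨f, hf, hf0, hfP⟩ := hP.exists_isMSequence_notMem hxP
  obtain ⟨n, hn⟩ := hx f hf hf0
  exact hfP n (hn ▸ P.zero_mem)

theorem TwoSidedIdeal.mem_sSup_of_directedOn {s : Set (TwoSidedIdeal R)} (hne : s.Nonempty)
    (hs : DirectedOn (· ≤ ·) s) {x : R} : x ∈ sSup s ↔ ∃ I ∈ s, x ∈ I := by
  refine ⟨fun hx => ?_, fun ⟨I, hI, hxI⟩ => le_sSup hI hxI⟩
  obtain ⟨I₀, hI₀⟩ := hne
  let J : TwoSidedIdeal R := .mk' {x | ∃ I ∈ s, x ∈ I} ⟨I₀, hI₀, I₀.zero_mem⟩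
    (fun ⟨I, hI, hx⟩ ⟨I', hI', hy⟩ =>
      let ⟨K, hK, hIK, hI'K⟩ := hs I hI I' hI'
      ⟨K, hK, K.add_mem (hIK hx) (hI'K hy)⟩)
    (fun ⟨I, hI, hx⟩ => ⟨I, hI, I.neg_mem hx⟩)
    (fun ⟨I, hI, hy⟩ => ⟨I, hI, I.mul_mem_left _ _ hy⟩)
    (fun ⟨I, hI, hx⟩ => ⟨I, hI, I.mul_mem_right _ _ hx⟩)
  have hJ : sSup s ≤ J := sSup_le fun I hI y hy => (mem_mk' _ _ _ _ _ _ _).2 ⟨I, hI, hy⟩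
  simpa [J, mem_mk'] using hJ hx

theorem TwoSidedIdeal.mul_mul_mem_of_mem_span_insert {Q : TwoSidedIdeal R} {a b : R}
    (hab : ∀ r, a * r * b ∈ Q) {α β : R} (hα : α ∈ span (insert a (Q : Set R)))
    (hβ : β ∈ span (insert b (Q : Set R))) (r : R) : α * r * β ∈ Q := by
  have hαb : ∀ r, α * r * b ∈ Q := by
    induction hα using span_induction with
    | mem x hx =>
      rcases hx with rfl | hx
      exacts [hab, fun r => Q.mul_mem_right _ _ (Q.mul_mem_right _ _ hx)]
    | zero => simp
    | add x y _ _ hx hy => exact fun r => by simpa [add_mul] using Q.add_mem (hx r) (hy r)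
    | neg x _ hx => exact fun r => by simpa using Q.neg_mem (hx r)
    | left_absorb u x _ hx => exact fun r => by simpa [mul_assoc] using Q.mul_mem_left u _ (hx r)
    | right_absorb v x _ hx => exact fun r => by simpa [mul_assoc] using hx (v * r)
  induction hβ using span_induction generalizing r with
  | mem x hx =>
    rcases hx with rfl | hx
    exacts [hαb r, Q.mul_mem_left _ _ hx]
  | zero => simp
  | add x y _ _ hx hy => simpa [mul_add] using Q.add_mem (hx r) (hy r)
  | neg x _ hx => simpa using Q.neg_mem (hx r)
  | left_absorb u x _ hx => simpa [mul_assoc] using hx (r * u)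
  | right_absorb v x _ hx => simpa [mul_assoc] using Q.mul_mem_right _ v (hx r)

theorem IsMSequence.isPrimeTwoSided_of_maximal {f : ℕ → R} (hf : IsMSequence f)
    {Q : TwoSidedIdeal R} (hQ : Maximal (fun I : TwoSidedIdeal R => ∀ n, f n ∉ I) Q) :
    IsPrimeTwoSided Q := by
  refine ⟨fun h => hQ.1 0 (h ▸ TwoSidedIdeal.mem_top R), fun a b hab => ?_⟩
  by_contra! ⟨ha, hb⟩
  have meets (c : R) (hc : c ∉ Q) : ∃ n, f n ∈ TwoSidedIdeal.span (insert c (Q : Set R)) := by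
    by_contra! h
    have hle : Q ≤ TwoSidedIdeal.span (insert c (Q : Set R)) :=
      fun x hx => TwoSidedIdeal.subset_span (Set.mem_insert_of_mem _ hx)
    exact hc (hQ.2 h hle (TwoSidedIdeal.subset_span (Set.mem_insert c _)))
  obtain ⟨i, hi⟩ := meets a ha
  obtain ⟨j, hj⟩ := meets b hb
  obtain ⟨r, hr⟩ := hf (max i j)
  apply hQ.1 (max i j + 1)
  rw [hr]
  exact TwoSidedIdeal.mul_mul_mem_of_mem_span_insert hab
    (hf.mem_of_le _ hi (le_max_left i j)) (hf.mem_of_le _ hj (le_max_right i j)) r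

theorem IsMSequence.exists_isPrimeTwoSided_forall_notMem {f : ℕ → R} (hf : IsMSequence f)
    (hne : ∀ n, f n ≠ 0) : ∃ P : TwoSidedIdeal R, IsPrimeTwoSided P ∧ ∀ n, f n ∉ P := by
  have chain_bdd (c : Set (TwoSidedIdeal R)) (hc : c ⊆ {I | ∀ n, f n ∉ I})
      (hchain : IsChain (· ≤ ·) c) (I : TwoSidedIdeal R) (hI : I ∈ c) :
      ∃ J ∈ {I : TwoSidedIdeal R | ∀ n, f n ∉ I}, ∀ K ∈ c, K ≤ J := by
    refine ⟨sSup c, fun n hn => ?_, fun _ => le_sSup⟩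
    obtain ⟨J, hJ, hnJ⟩ := (TwoSidedIdeal.mem_sSup_of_directedOn ⟨I, hI⟩ hchain.directedOn).1 hn
    exact hc hJ n hnJ
  obtain ⟨Q, -, hQ⟩ := zorn_le_nonempty₀ _ chain_bdd ⊥
    (fun n hn => hne n ((TwoSidedIdeal.mem_bot R).1 hn))
  exact ⟨Q, hf.isPrimeTwoSided_of_maximal hQ, hQ.1⟩

theorem mem_primeRadical_iff_isStronglyNilpotent {x : R} :
    x ∈ primeRadical R ↔ IsStronglyNilpotent x := by
  refine ⟨fun hx f hf hf0 => ?_, IsStronglyNilpotent.mem_primeRadical⟩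
  by_contra! hne
  obtain ⟨P, hP, hfP⟩ := hf.exists_isPrimeTwoSided_forall_notMem hne
  exact hfP 0 (hf0 ▸ hx P hP)

section Transfer

variable {T : Type*} [Ring T] {φ : R →+* T}

theorem IsMSequence.map {f : ℕ → R} (hf : IsMSequence f) (φ : R →+* T) : IsMSequence (φ ∘ f) :=
  fun n => let ⟨r, hr⟩ := hf n; ⟨φ r, by simp [hr]⟩

theorem IsStronglyNilpotent.of_map (hφ : Function.Injective φ) {x : R}
    (hx : IsStronglyNilpotent (φ x)) : IsStronglyNilpotent x := fun _ hf hf0 =>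
  (hx _ (hf.map φ) (congrArg φ hf0)).imp fun _ hn => hφ (hn.trans (map_zero φ).symm)

theorem IsPrimeTwoSided.comap (hφ : ∀ t : T, ∃ u ∈ Set.center T, ∃ r, t = u * φ r)
    {P : TwoSidedIdeal T} (hP : IsPrimeTwoSided P) : IsPrimeTwoSided (P.comap φ) := by
  refine ⟨fun h => hP.1 ((P.one_mem_iff).1 ?_), fun a b hab => ?_⟩
  · simpa using (TwoSidedIdeal.mem_comap φ).1 (h ▸ TwoSidedIdeal.mem_top R : (1 : R) ∈ P.comap φ)
  · simp only [TwoSidedIdeal.mem_comap] at hab ⊢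
    refine hP.2 _ _ fun t => ?_
    obtain ⟨u, hu, r, rfl⟩ := hφ t
    rw [← mul_assoc (φ a), Semigroup.mem_center_iff.1 hu (φ a)]
    simpa [mul_assoc] using P.mul_mem_left u _ (hab r)

theorem map_mem_primeRadical_iff (hinj : Function.Injective φ)
    (hφ : ∀ t : T, ∃ u ∈ Set.center T, ∃ r, t = u * φ r) {x : R} :
    φ x ∈ primeRadical T ↔ x ∈ primeRadical R :=
  ⟨fun h => ((mem_primeRadical_iff_isStronglyNilpotent.1 h).of_map hinj).mem_primeRadical,
    fun hx _ hP => (TwoSidedIdeal.mem_comap φ).1 (hx _ (hP.comap hφ))⟩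

theorem mul_mul_mul_comm_of_mem_center {M : Type*} [Semigroup M] {u v w : M}
    (hv : v ∈ Set.center M) (hw : w ∈ Set.center M) (a b c : M) :
    u * a * (v * b) * (w * c) = u * v * w * (a * b * c) := by
  have hv' := (Set.mem_center_iff.1 hv).comm
  have hw' := (Set.mem_center_iff.1 hw).comm
  simp only [mul_assoc]
  rw [(hv' a).symm.left_comm, (hw' b).symm.left_comm, (hw' a).symm.left_comm]

theorem isPSymmetric_iff_of_injective (hinj : Function.Injective φ)
    (hφ : ∀ t : T, ∃ u : Tˣ, (u : T) ∈ Set.center T ∧ ∃ r, t = u * φ r) :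
    IsPSymmetric R ↔ IsPSymmetric T := by
  have hφ' (t : T) : ∃ u ∈ Set.center T, ∃ r, t = u * φ r :=
    let ⟨u, hu, r, h⟩ := hφ t; ⟨u, hu, r, h⟩
  constructor
  · intro hR A B C hABC
    obtain ⟨u, hu, a, rfl⟩ := hφ A
    obtain ⟨v, hv, b, rfl⟩ := hφ B
    obtain ⟨w, hw, c, rfl⟩ := hφ C
    rw [mul_mul_mul_comm_of_mem_center hv hw, ← Units.val_mul, ← Units.val_mul,
      Units.mul_right_eq_zero, ← map_mul, ← map_mul, ← map_zero φ] at hABC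
    have hbac := (map_mem_primeRadical_iff hinj hφ').2 (hR a b c (hinj hABC))
    rw [mul_mul_mul_comm_of_mem_center hu hw, ← map_mul, ← map_mul]
    exact fun P hP => P.mul_mem_left _ _ (hbac P hP)
  · intro hT a b c habc
    rw [← map_mem_primeRadical_iff hinj hφ', map_mul, map_mul]
    exact hT _ _ _ (by rw [← map_mul, ← map_mul, habc, map_zero])

end Transfer

namespace OreLocalization

variable {S : Submonoid R} [OreSet S]

theorem one_oreDiv_mem_center {s : S} (hs : (s : R) ∈ Set.center R) :
    (1 /ₒ s : R[S⁻¹]) ∈ Set.center R[S⁻¹] := by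
  refine Semigroup.mem_center_iff.2 fun z => ?_
  induction z using OreLocalization.ind with
  | _ r t =>
    have hs' := (Set.mem_center_iff.1 hs).comm
    have hst : s * t = t * s := Subtype.ext (hs' t)
    rw [OreLocalization.one_div_mul, oreDiv_mul_char r 1 t s r s (hs' r), mul_one, hst]

theorem exists_unit_mem_center_eq_mul_numerator (hS : (S : Set R) ⊆ Set.center R)
    (z : R[S⁻¹]) : ∃ u : R[S⁻¹]ˣ, (u : R[S⁻¹]) ∈ Set.center R[S⁻¹] ∧
      ∃ r, z = (u : R[S⁻¹]) * numeratorRingHom r := by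
  induction z using OreLocalization.ind with
  | _ r s =>
    refine ⟨(numeratorUnit s)⁻¹, one_oreDiv_mem_center (hS s.2), r, ?_⟩
    change r /ₒ s = (1 /ₒ s) * (r /ₒ 1)
    rw [OreLocalization.one_div_mul, one_mul]

end OreLocalization

end

/-- If `S` is a multiplicatively closed set of central regular elements, then `R` is
`P`-symmetric if and only if the localization `S⁻¹R` is `P`-symmetric. -/
theorem isPSymmetric_iff_oreLocalization (R : Type*) [Ring R] (S : Submonoid R)
    [OreLocalization.OreSet S]
    (hcen : (S : Set R) ⊆ Set.center R) (hreg : (S : Set R) ⊆ nonZeroDivisors R) :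
    IsPSymmetric R ↔ IsPSymmetric (OreLocalization S R) :=
  isPSymmetric_iff_of_injective (φ := OreLocalization.numeratorRingHom)
    (OreLocalization.numeratorHom_inj fun _ hs => (hreg hs).1)
    (OreLocalization.exists_unit_mem_center_eq_mul_numerator hcen)
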